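/- Let m, n ≥ 0 and α, β ∈ CS_{d,L} with |α| + m = |β| + n, where |λ| = λ_1 + ... + λ_d. Then Σ_{μ ⊆ α,β, |α/μ|=n, |β/μ|=m} |SCT(α/μ)|·|SCT(β/μ)| = Σ_{λ ⊇ α,β, |λ/β|=n, |λ/α|=m} |SCT(λ/β)|·|SCT(λ/α)|, where SCT(λ/μ) denotes the set of standard cylindric tableaux of period (d,L) and shape λ/μ. -/

import Mathlib

/-- A cylindric shape of period `(d, L)`. -/
def IsCylindricShape (d L : ℕ) (a : ℤ → ℤ) : Prop :=
  (∀ i j : ℤ, i ≤ j → a j ≤ a i) ∧ ∀ i : ℤ, a i = a (i + d) + L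

/-- Adding a cell in row `i`: increase `a j` by `1` for all `j ≡ i (mod d)`. -/
def addCellAt (d : ℕ) (i : ℤ) (a : ℤ → ℤ) : ℤ → ℤ :=
  fun j => if (d : ℤ) ∣ (j - i) then a j + 1 else a j

/-- The walk representation of a standard cylindric tableau of shape `lam/mu` with
`n` cells: a chain of shapes from `mu` to `lam`, each step adding one cell. -/
def IsSCTWalk (d L n : ℕ) (mu lam : ℤ → ℤ) (p : Fin (n + 1) → ℤ → ℤ) : Prop :=
  p 0 = mu ∧ p (Fin.last n) = lam ∧ (∀ k, IsCylindricShape d L (p k)) ∧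
  ∀ k : Fin n, ∃ i : ℤ, p k.succ = addCellAt d i (p k.castSucc)

def removeCellAt (d : ℕ) (i : ℤ) (a : ℤ → ℤ) : ℤ → ℤ :=
  fun j => if (d : ℤ) ∣ (j - i) then a j - 1 else a j

section helpers
variable {d L : ℕ} {a b mu lam : ℤ → ℤ}

lemma shape_of_succ (h1 : ∀ i : ℤ, a (i+1) ≤ a i) (h2 : ∀ i : ℤ, a i = a (i + d) + L) :
    IsCylindricShape d L a := by
  refine ⟨fun i j hij => ?_, h2⟩
  have key : ∀ n : ℕ, a (i + n) ≤ a i := by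
    intro n
    induction n with
    | zero => simp
    | succ n ih =>
        have h3 := h1 (i + n)
        have e : i + ((n + 1 : ℕ) : ℤ) = (i + n) + 1 := by push_cast; ring
        rw [e]
        exact le_trans h3 ih
  have hn : j = i + ((j - i).toNat : ℤ) := by omega
  rw [hn]; exact key _

lemma shape_shift (h : IsCylindricShape d L a) (i t : ℤ) : a (i + t * d) = a i - t * L := by
  induction t using Int.induction_on with
  | zero => simp
  | succ t ih =>
      have h2 := h.2 (i + t * d)
      rw [show i + ((t:ℤ)+1) * (d:ℤ) = (i + t*d) + d by ring]
      have : ((t:ℤ)+1) * (L:ℤ) = t * L + L := by ring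
      omega
  | pred t ih =>
      have h2 := h.2 (i + (-(t:ℤ)-1) * (d:ℤ))
      rw [show i + (-(t:ℤ)-1) * (d:ℤ) + (d:ℤ) = i + (-(t:ℤ)) * d by ring] at h2
      have e1 : a (i + -((t:ℤ)+1) * (d:ℤ)) = a (i + (-(t:ℤ)-1) * d) := by ring_nf
      have e2 : -((t:ℤ)+1) * (L:ℤ) = (-(t:ℤ)-1) * L := by ring
      have e3 : (-(t:ℤ)-1) * (L:ℤ) = -(t:ℤ) * L - L := by ring
      have e4 : a (i + -(t:ℤ) * (d:ℤ)) = a (i + (-(t:ℤ)) * d) := rfl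
      omega

lemma shape_shift' (h : IsCylindricShape d L a) {x y : ℤ} (hxy : (d:ℤ) ∣ (x - y)) :
    ∃ t : ℤ, x = y + t * d ∧ a x = a y - t * L := by
  obtain ⟨t, ht⟩ := hxy
  rw [mul_comm] at ht
  refine ⟨t, by omega, ?_⟩
  rw [show x = y + t * d by omega]
  exact shape_shift h y t

lemma dvd_shift {i i' j : ℤ} (h : (d:ℤ) ∣ (i - i')) : ((d:ℤ) ∣ (j - i)) ↔ ((d:ℤ) ∣ (j - i')) := by
  constructor <;> intro hh
  · have := dvd_add hh h; rwa [show j - i + (i - i') = j - i' by ring] at this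
  · have := dvd_sub hh h; rwa [show j - i' - (i - i') = j - i by ring] at this

lemma dvd_period {j k : ℤ} : ((d:ℤ) ∣ (j - k)) ↔ ((d:ℤ) ∣ (j + d - k)) := by
  constructor <;> intro hh
  · have := dvd_add hh (dvd_refl (d:ℤ))
    rwa [show j - k + (d:ℤ) = j + d - k by ring] at this
  · have := dvd_sub hh (dvd_refl (d:ℤ))
    rwa [show j + (d:ℤ) - k - d = j - k by ring] at this

lemma addCellAt_congr {i i' : ℤ} (h : (d:ℤ) ∣ (i - i')) : addCellAt d i a = addCellAt d i' a := by
  funext j; simp only [addCellAt, dvd_shift h]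

lemma removeCellAt_congr {i i' : ℤ} (h : (d:ℤ) ∣ (i - i')) :
    removeCellAt d i a = removeCellAt d i' a := by
  funext j; simp only [removeCellAt, dvd_shift h]

lemma addCellAt_apply_self (i : ℤ) : addCellAt d i a i = a i + 1 := by
  simp [addCellAt]

lemma removeCellAt_addCellAt (i : ℤ) : removeCellAt d i (addCellAt d i a) = a := by
  funext j; simp only [removeCellAt, addCellAt]; split <;> simp

lemma addCellAt_removeCellAt (i : ℤ) : addCellAt d i (removeCellAt d i a) = a := by
  funext j; simp only [removeCellAt, addCellAt]; split <;> simp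

lemma residue_of_ne {i x : ℤ} (hA : a = addCellAt d i mu) (hx : a x ≠ mu x) :
    (d:ℤ) ∣ (x - i) ∧ a x = mu x + 1 := by
  subst hA
  by_cases h : (d:ℤ) ∣ (x - i)
  · exact ⟨h, by simp [addCellAt, h]⟩
  · exact absurd (by simp [addCellAt, h]) hx

lemma exists_ne_of_add {i : ℤ} (hA : a = addCellAt d i mu) : ∃ x, a x ≠ mu x :=
  ⟨i, by subst hA; simp [addCellAt]⟩

lemma addCellAt_shape (hd : 1 ≤ d) (ha : IsCylindricShape d L a) {k : ℤ}
    (hk : a k + 1 ≤ a (k-1)) : IsCylindricShape d L (addCellAt d k a) := by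
  have hd0 : ((d:ℤ)) ≠ 0 := by exact_mod_cast Nat.one_le_iff_ne_zero.mp hd
  refine shape_of_succ (fun j => ?_) (fun j => ?_)
  · by_cases h1 : (d:ℤ) ∣ (j + 1 - k) <;> by_cases h2 : (d:ℤ) ∣ (j - k)
    · simp only [addCellAt, if_pos h1, if_pos h2]
      have := ha.1 j (j+1) (by omega); omega
    · simp only [addCellAt, if_pos h1, if_neg h2]
      obtain ⟨t, ht, hv⟩ := shape_shift' ha h1
      have h3 : (d:ℤ) ∣ (j - (k-1)) := ⟨t, by rw [mul_comm]; omega⟩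
      obtain ⟨t', ht', hv'⟩ := shape_shift' ha h3
      have htt : t = t' := by
        have h4 : t * (d:ℤ) = t' * d := by omega
        exact mul_right_cancel₀ hd0 h4
      subst htt
      omega
    · simp only [addCellAt, if_neg h1, if_pos h2]
      have := ha.1 j (j+1) (by omega); omega
    · simp only [addCellAt, if_neg h1, if_neg h2]
      exact ha.1 j (j+1) (by omega)
  · have h2 := ha.2 j
    have hiff := dvd_period (d := d) (j := j) (k := k)
    by_cases hh : (d:ℤ) ∣ (j - k)
    · simp only [addCellAt, if_pos hh, if_pos (hiff.mp hh)]; omega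
    · simp only [addCellAt, if_neg hh, if_neg (fun hc => hh (hiff.mpr hc))]; omega

lemma removeCellAt_shape (hd : 1 ≤ d) (ha : IsCylindricShape d L a) {k : ℤ}
    (hk : a (k+1) + 1 ≤ a k) : IsCylindricShape d L (removeCellAt d k a) := by
  have hd0 : ((d:ℤ)) ≠ 0 := by exact_mod_cast Nat.one_le_iff_ne_zero.mp hd
  refine shape_of_succ (fun j => ?_) (fun j => ?_)
  · by_cases h1 : (d:ℤ) ∣ (j + 1 - k) <;> by_cases h2 : (d:ℤ) ∣ (j - k)
    · simp only [removeCellAt, if_pos h1, if_pos h2]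
      have := ha.1 j (j+1) (by omega); omega
    · simp only [removeCellAt, if_pos h1, if_neg h2]
      have := ha.1 j (j+1) (by omega); omega
    · simp only [removeCellAt, if_neg h1, if_pos h2]
      obtain ⟨t, ht, hv⟩ := shape_shift' ha h2
      have h3 : (d:ℤ) ∣ (j + 1 - (k+1)) := ⟨t, by rw [mul_comm]; omega⟩
      obtain ⟨t', ht', hv'⟩ := shape_shift' ha h3
      have htt : t = t' := by
        have h4 : t * (d:ℤ) = t' * d := by omega
        exact mul_right_cancel₀ hd0 h4
      subst htt
      omega
    · simp only [removeCellAt, if_neg h1, if_neg h2]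
      exact ha.1 j (j+1) (by omega)
  · have h2 := ha.2 j
    have hiff := dvd_period (d := d) (j := j) (k := k)
    by_cases hh : (d:ℤ) ∣ (j - k)
    · simp only [removeCellAt, if_pos hh, if_pos (hiff.mp hh)]; omega
    · simp only [removeCellAt, if_neg hh, if_neg (fun hc => hh (hiff.mpr hc))]; omega

end helpers

section rules
variable {d L : ℕ} {a b mu lam : ℤ → ℤ}

lemma addable_shift (ha : IsCylindricShape d L a) {i x : ℤ} (h : (d:ℤ) ∣ (x - i))
    (hadd : a i + 1 ≤ a (i-1)) : a x + 1 ≤ a (x-1) := by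
  obtain ⟨t, ht, hv⟩ := shape_shift' ha h
  have h2 : x - 1 = (i - 1) + t * d := by omega
  have hv2 : a (x-1) = a (i-1) - t * L := by rw [h2]; exact shape_shift ha (i-1) t
  omega

lemma addable_of_shape (hd : 1 ≤ d) (hL : 1 ≤ L) (hmu : IsCylindricShape d L mu) {j : ℤ}
    (hb : IsCylindricShape d L (addCellAt d j mu)) : mu j + 1 ≤ mu (j - 1) := by
  have h1 := hb.1 (j-1) j (by omega)
  by_cases hdd : (d:ℤ) ∣ (j - 1 - j)
  · -- then d ∣ 1, so d = 1
    have hdd1 : (d:ℤ) ∣ 1 := by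
      have := Int.dvd_neg.mpr hdd
      rwa [show -(j - 1 - j) = (1:ℤ) by ring] at this
    have hd1 : d = 1 := by
      have := Int.le_of_dvd (by norm_num) hdd1
      omega
    have := hmu.2 (j-1)
    rw [hd1] at this
    push_cast at this
    rw [show j - 1 + 1 = j by ring] at this
    omega
  · simp only [addCellAt, if_neg hdd, sub_self, dvd_zero, if_pos] at h1
    -- h1 : mu j + 1 ≤ mu (j-1)  (value at j is +1, at j-1 unchanged)
    omega

open Classical in
noncomputable def localRule (d : ℕ) (mu a b : ℤ → ℤ) : ℤ → ℤ :=
  if a = b then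
    (if h2 : ∃ x, a x ≠ mu x then addCellAt d (Classical.choose h2 + 1) a else a)
  else fun x => a x + b x - mu x

open Classical in
noncomputable def localRuleInv (d : ℕ) (a b lam : ℤ → ℤ) : ℤ → ℤ :=
  if a = b then
    (if h2 : ∃ x, lam x ≠ a x then removeCellAt d (Classical.choose h2 - 1) a else a)
  else fun x => a x + b x - lam x

lemma localRule_comm (mu a b : ℤ → ℤ) : localRule d mu a b = localRule d mu b a := by
  by_cases h : a = b
  · subst h; rfl
  · simp only [localRule, if_neg h, if_neg (Ne.symm h)]; funext x; ring

lemma localRuleInv_comm (a b lam : ℤ → ℤ) : localRuleInv d a b lam = localRuleInv d b a lam := by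
  by_cases h : a = b
  · subst h; rfl
  · simp only [localRuleInv, if_neg h, if_neg (Ne.symm h)]; funext x; ring

lemma rule_spec (hd : 1 ≤ d) (hL : 1 ≤ L) (hmu : IsCylindricShape d L mu)
    (ha : IsCylindricShape d L a) (hb : IsCylindricShape d L b)
    (hia : ∃ i, a = addCellAt d i mu) (hib : ∃ i, b = addCellAt d i mu) :
    IsCylindricShape d L (localRule d mu a b) ∧
    (∃ i, localRule d mu a b = addCellAt d i a) ∧
    (∃ i, localRule d mu a b = addCellAt d i b) ∧
    localRuleInv d a b (localRule d mu a b) = mu := by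
  obtain ⟨i, hi⟩ := hia
  obtain ⟨j, hj⟩ := hib
  by_cases hab : a = b
  · -- same-shape case
    have hex : ∃ x, a x ≠ mu x := exists_ne_of_add hi
    obtain ⟨hdvd, hval⟩ := residue_of_ne hi (Classical.choose_spec hex)
    set i0 := Classical.choose hex with hi0
    have hA0 : a = addCellAt d i0 mu := hi.trans (addCellAt_congr hdvd).symm
    have hrule : localRule d mu a b = addCellAt d (i0 + 1) a := by
      simp only [localRule, if_pos hab, dif_pos hex]
      rfl
    have hadd : a (i0 + 1) + 1 ≤ a (i0 + 1 - 1) := by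
      rw [show i0 + 1 - 1 = i0 by ring]
      by_cases hdd : (d:ℤ) ∣ (i0 + 1 - i0)
      · have hd1 : d = 1 := by
          have h5 : (d:ℤ) ∣ 1 := by rwa [show i0 + 1 - i0 = (1:ℤ) by ring] at hdd
          have := Int.le_of_dvd (by norm_num) h5
          omega
        have h6 := ha.2 i0
        rw [hd1] at h6
        push_cast at h6
        omega
      · have h7 : a (i0 + 1) = mu (i0 + 1) := by
          rw [hA0]; simp only [addCellAt]
          rw [if_neg (by rwa [show i0 + 1 - i0 = (1:ℤ) by ring] at hdd ⊢)]
        have h8 : mu (i0 + 1) ≤ mu i0 := hmu.1 i0 (i0+1) (by omega)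
        omega
    have hshape : IsCylindricShape d L (localRule d mu a b) := by
      rw [hrule]; exact addCellAt_shape hd ha hadd
    refine ⟨hshape, ⟨i0 + 1, hrule⟩, ⟨i0 + 1, hab ▸ hrule⟩, ?_⟩
    -- inverse
    have hex2 : ∃ x, localRule d mu a b x ≠ a x := exists_ne_of_add hrule
    obtain ⟨hdvd2, _⟩ := residue_of_ne hrule (Classical.choose_spec hex2)
    set j0 := Classical.choose hex2 with hj0
    simp only [localRuleInv, if_pos hab, dif_pos hex2]
    rw [← hj0]
    have : removeCellAt d (j0 - 1) a = removeCellAt d i0 a :=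
      removeCellAt_congr (by rwa [show j0 - 1 - i0 = j0 - (i0 + 1) by ring])
    rw [this, hA0, removeCellAt_addCellAt]
  · -- distinct-shapes case
    have hji : ¬ (d:ℤ) ∣ (j - i) := by
      intro h
      have h' : (d:ℤ) ∣ (i - j) := by
        rw [show i - j = -(j - i) by ring]; exact Int.dvd_neg.mpr h
      exact hab (by rw [hi, hj, addCellAt_congr h'])
    have hrule : localRule d mu a b = fun x => a x + b x - mu x := by
      simp only [localRule, if_neg hab]
    have hLa : (fun x => a x + b x - mu x) = addCellAt d j a := by
      funext x
      rw [hj]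
      simp only [addCellAt]
      split <;> ring
    have hLb : (fun x => a x + b x - mu x) = addCellAt d i b := by
      funext x
      rw [hi]
      simp only [addCellAt]
      split <;> ring
    have haj : a j = mu j := by
      rw [hi]; simp only [addCellAt]; rw [if_neg hji]
    have hmuadd : mu j + 1 ≤ mu (j - 1) := addable_of_shape hd hL hmu (hj ▸ hb)
    have haj1 : mu (j - 1) ≤ a (j - 1) := by
      rw [hi]; simp only [addCellAt]; split <;> omega
    have hadd : a j + 1 ≤ a (j - 1) := by omega
    have hshape : IsCylindricShape d L (localRule d mu a b) := by
      rw [hrule, hLa]; exact addCellAt_shape hd ha hadd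
    refine ⟨hshape, ⟨j, hrule.trans hLa⟩, ⟨i, hrule.trans hLb⟩, ?_⟩
    simp only [localRuleInv, if_neg hab]
    funext x
    simp only [hrule]
    ring

lemma inv_spec (hd : 1 ≤ d) (hL : 1 ≤ L) (hlam : IsCylindricShape d L lam)
    (ha : IsCylindricShape d L a) (hb : IsCylindricShape d L b)
    (hia : ∃ i, lam = addCellAt d i a) (hib : ∃ i, lam = addCellAt d i b) :
    IsCylindricShape d L (localRuleInv d a b lam) ∧
    (∃ i, a = addCellAt d i (localRuleInv d a b lam)) ∧
    (∃ i, b = addCellAt d i (localRuleInv d a b lam)) ∧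
    localRule d (localRuleInv d a b lam) a b = lam := by
  obtain ⟨i, hi⟩ := hia
  obtain ⟨j, hj⟩ := hib
  by_cases hab : a = b
  · have hex : ∃ x, lam x ≠ a x := exists_ne_of_add hi
    obtain ⟨hdvd, hval⟩ := residue_of_ne hi (Classical.choose_spec hex)
    set j0 := Classical.choose hex with hj0
    have hL0 : lam = addCellAt d j0 a := hi.trans (addCellAt_congr hdvd).symm
    have hinv : localRuleInv d a b lam = removeCellAt d (j0 - 1) a := by
      simp only [localRuleInv, if_pos hab, dif_pos hex]
      rfl
    have haddi : a i + 1 ≤ a (i - 1) := addable_of_shape hd hL ha (hi ▸ hlam)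
    have haddj0 : a j0 + 1 ≤ a (j0 - 1) := addable_shift ha hdvd haddi
    have hrm : a (j0 - 1 + 1) + 1 ≤ a (j0 - 1) := by
      rw [show j0 - 1 + 1 = j0 by ring]; exact haddj0
    have hshape : IsCylindricShape d L (localRuleInv d a b lam) := by
      rw [hinv]; exact removeCellAt_shape hd ha hrm
    have hA : a = addCellAt d (j0 - 1) (localRuleInv d a b lam) := by
      rw [hinv, addCellAt_removeCellAt]
    refine ⟨hshape, ⟨j0 - 1, hA⟩, ⟨j0 - 1, hab ▸ hA⟩, ?_⟩
    have hex2 : ∃ x, a x ≠ localRuleInv d a b lam x := exists_ne_of_add hA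
    obtain ⟨hdvd2, _⟩ := residue_of_ne hA (Classical.choose_spec hex2)
    set i1 := Classical.choose hex2 with hi1
    simp only [localRule, if_pos hab, dif_pos hex2]
    rw [← hi1]
    have : addCellAt d (i1 + 1) a = addCellAt d j0 a :=
      addCellAt_congr (by rwa [show i1 + 1 - j0 = i1 - (j0 - 1) by ring])
    rw [this, ← hL0]
  · have hji : ¬ (d:ℤ) ∣ (j - i) := by
      intro h
      have h' : (d:ℤ) ∣ (i - j) := by
        rw [show i - j = -(j - i) by ring]; exact Int.dvd_neg.mpr h
      apply hab
      rw [show a = removeCellAt d i lam by rw [hi, removeCellAt_addCellAt],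
          show b = removeCellAt d j lam by rw [hj, removeCellAt_addCellAt],
          removeCellAt_congr h']
    have hd1 : ¬ (d:ℤ) ∣ 1 := by
      intro h
      exact hji (dvd_trans h (one_dvd _))
    have hinv : localRuleInv d a b lam = fun x => a x + b x - lam x := by
      simp only [localRuleInv, if_neg hab]
    have hIa : (fun x => a x + b x - lam x) = removeCellAt d j a := by
      funext x
      rw [hj]
      simp only [addCellAt, removeCellAt]
      split <;> ring
    have hIb : (fun x => a x + b x - lam x) = removeCellAt d i b := by
      funext x
      rw [hi]
      simp only [addCellAt, removeCellAt]
      split <;> ring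
    -- removability of class j in a
    have haj : a j = lam j - 1 + 1 := by
      have : lam j = b j + 1 := by rw [hj]; simp [addCellAt]
      have haj2 : a j = lam j := by
        rw [show a = removeCellAt d i lam by rw [hi, removeCellAt_addCellAt]]
        simp only [removeCellAt]; rw [if_neg hji]
      omega
    have hrm : a (j + 1) + 1 ≤ a j := by
      have hlamj : lam j = b j + 1 := by rw [hj]; simp [addCellAt]
      have haj2 : a j = lam j := by
        rw [show a = removeCellAt d i lam by rw [hi, removeCellAt_addCellAt]]
        simp only [removeCellAt]; rw [if_neg hji]
      by_cases hc : (d:ℤ) ∣ (j + 1 - i)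
      · have h1 : a (j+1) = lam (j+1) - 1 := by
          rw [show a = removeCellAt d i lam by rw [hi, removeCellAt_addCellAt]]
          simp only [removeCellAt]; rw [if_pos hc]
        have h2 : lam (j+1) ≤ lam j := hlam.1 j (j+1) (by omega)
        omega
      · have h1 : a (j+1) = lam (j+1) := by
          rw [show a = removeCellAt d i lam by rw [hi, removeCellAt_addCellAt]]
          simp only [removeCellAt]; rw [if_neg hc]
        have h2 : lam (j+1) = b (j+1) := by
          rw [hj]; simp only [addCellAt]
          rw [if_neg (by rwa [show j + 1 - j = (1:ℤ) by ring])]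
        have h3 : b (j+1) ≤ b j := hb.1 j (j+1) (by omega)
        omega
    have hshape : IsCylindricShape d L (localRuleInv d a b lam) := by
      rw [hinv, hIa]; exact removeCellAt_shape hd ha hrm
    have hA : a = addCellAt d j (localRuleInv d a b lam) := by
      rw [hinv, hIa, addCellAt_removeCellAt]
    have hB : b = addCellAt d i (localRuleInv d a b lam) := by
      rw [hinv, hIb, addCellAt_removeCellAt]
    refine ⟨hshape, ⟨j, hA⟩, ⟨i, hB⟩, ?_⟩
    simp only [localRule, if_neg hab]
    funext x
    simp only [hinv]
    ring

noncomputable def grid (R : (ℤ→ℤ) → (ℤ→ℤ) → (ℤ→ℤ) → (ℤ→ℤ)) (row col : ℕ → ℤ→ℤ) :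
    ℕ → ℕ → (ℤ→ℤ)
  | k, 0 => row k
  | 0, l+1 => col (l+1)
  | k+1, l+1 => R (grid R row col k l) (grid R row col (k+1) l) (grid R row col k (l+1))
termination_by k l => k + l

lemma grid_row (R) (row col : ℕ → ℤ→ℤ) (k : ℕ) : grid R row col k 0 = row k := by
  cases k <;> simp [grid]

lemma grid_col (R) (row col : ℕ → ℤ→ℤ) (l : ℕ) : grid R row col 0 (l+1) = col (l+1) := by
  simp [grid]

lemma grid_succ (R) (row col : ℕ → ℤ→ℤ) (k l : ℕ) :
    grid R row col (k+1) (l+1) =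
      R (grid R row col k l) (grid R row col (k+1) l) (grid R row col k (l+1)) := by
  simp [grid]

section invariants
variable {d L : ℕ}

lemma grid_fwd (hd : 1 ≤ d) (hL : 1 ≤ L) {n m : ℕ} {row col : ℕ → ℤ→ℤ}
    (hrows : ∀ k, k ≤ n → IsCylindricShape d L (row k))
    (hrowstep : ∀ k, k < n → ∃ i, row (k+1) = addCellAt d i (row k))
    (hcols : ∀ l, l ≤ m → IsCylindricShape d L (col l))
    (hcolstep : ∀ l, l < m → ∃ i, col (l+1) = addCellAt d i (col l))
    (h00 : row 0 = col 0) :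
    ∀ k l, k ≤ n → l ≤ m →
      IsCylindricShape d L (grid (localRule d) row col k l) ∧
      (1 ≤ k → ∃ i, grid (localRule d) row col k l
          = addCellAt d i (grid (localRule d) row col (k-1) l)) ∧
      (1 ≤ l → ∃ i, grid (localRule d) row col k l
          = addCellAt d i (grid (localRule d) row col k (l-1))) := by
  have main : ∀ t k l, k + l = t → k ≤ n → l ≤ m →
      IsCylindricShape d L (grid (localRule d) row col k l) ∧
      (1 ≤ k → ∃ i, grid (localRule d) row col k l
          = addCellAt d i (grid (localRule d) row col (k-1) l)) ∧
      (1 ≤ l → ∃ i, grid (localRule d) row col k l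
          = addCellAt d i (grid (localRule d) row col k (l-1))) := by
    intro t
    induction t using Nat.strong_induction_on with
    | _ t IH =>
      intro k l ht hkn hlm
      match k, l with
      | k, 0 =>
          rw [grid_row]
          refine ⟨hrows k hkn, ?_, ?_⟩
          · intro hk
            obtain ⟨i, hi⟩ := hrowstep (k-1) (by omega)
            rw [show k - 1 + 1 = k by omega] at hi
            exact ⟨i, by rw [grid_row]; exact hi⟩
          · omega
      | 0, l+1 =>
          rw [grid_col]
          refine ⟨hcols (l+1) hlm, by omega, ?_⟩
          · intro _
            obtain ⟨i, hi⟩ := hcolstep l (by omega)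
            refine ⟨i, ?_⟩
            simp only [Nat.add_sub_cancel]
            cases l with
            | zero => rw [grid_row, h00]; exact hi
            | succ l' => rw [grid_col]; exact hi
      | k+1, l+1 =>
          have T0 := IH (k + l) (by omega) k l rfl (by omega) (by omega)
          have T1 := IH (k + 1 + l) (by omega) (k+1) l rfl (by omega) (by omega)
          have T2 := IH (k + (l+1)) (by omega) k (l+1) rfl (by omega) (by omega)
          have hia : ∃ i, grid (localRule d) row col (k+1) l
              = addCellAt d i (grid (localRule d) row col k l) := by
            have := T1.2.1 (by omega)
            simpa using this
          have hib : ∃ i, grid (localRule d) row col k (l+1)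
              = addCellAt d i (grid (localRule d) row col k l) := by
            have := T2.2.2 (by omega)
            simpa using this
          have spec := rule_spec hd hL T0.1 T1.1 T2.1 hia hib
          rw [grid_succ]
          refine ⟨spec.1, ?_, ?_⟩
          · intro _
            simpa using spec.2.2.1
          · intro _
            simpa using spec.2.1
  intro k l
  exact main (k+l) k l rfl

lemma grid_bwd (hd : 1 ≤ d) (hL : 1 ≤ L) {n m : ℕ} {row col : ℕ → ℤ→ℤ}
    (hrows : ∀ k, k ≤ n → IsCylindricShape d L (row k))
    (hrowstep : ∀ k, k < n → ∃ i, row k = addCellAt d i (row (k+1)))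
    (hcols : ∀ l, l ≤ m → IsCylindricShape d L (col l))
    (hcolstep : ∀ l, l < m → ∃ i, col l = addCellAt d i (col (l+1)))
    (h00 : row 0 = col 0) :
    ∀ k l, k ≤ n → l ≤ m →
      IsCylindricShape d L (grid (fun c x y => localRuleInv d x y c) row col k l) ∧
      (1 ≤ k → ∃ i, grid (fun c x y => localRuleInv d x y c) row col (k-1) l
          = addCellAt d i (grid (fun c x y => localRuleInv d x y c) row col k l)) ∧
      (1 ≤ l → ∃ i, grid (fun c x y => localRuleInv d x y c) row col k (l-1)
          = addCellAt d i (grid (fun c x y => localRuleInv d x y c) row col k l)) := by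
  set R := fun c x y => localRuleInv d x y c with hR
  have main : ∀ t k l, k + l = t → k ≤ n → l ≤ m →
      IsCylindricShape d L (grid R row col k l) ∧
      (1 ≤ k → ∃ i, grid R row col (k-1) l = addCellAt d i (grid R row col k l)) ∧
      (1 ≤ l → ∃ i, grid R row col k (l-1) = addCellAt d i (grid R row col k l)) := by
    intro t
    induction t using Nat.strong_induction_on with
    | _ t IH =>
      intro k l ht hkn hlm
      match k, l with
      | k, 0 =>
          rw [grid_row]
          refine ⟨hrows k hkn, ?_, ?_⟩
          · intro hk
            obtain ⟨i, hi⟩ := hrowstep (k-1) (by omega)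
            rw [show k - 1 + 1 = k by omega] at hi
            exact ⟨i, by rw [grid_row]; exact hi⟩
          · omega
      | 0, l+1 =>
          rw [grid_col]
          refine ⟨hcols (l+1) hlm, by omega, ?_⟩
          · intro _
            obtain ⟨i, hi⟩ := hcolstep l (by omega)
            refine ⟨i, ?_⟩
            simp only [Nat.add_sub_cancel]
            cases l with
            | zero => rw [grid_row, h00]; exact hi
            | succ l' => rw [grid_col]; exact hi
      | k+1, l+1 =>
          have T0 := IH (k + l) (by omega) k l rfl (by omega) (by omega)
          have T1 := IH (k + 1 + l) (by omega) (k+1) l rfl (by omega) (by omega)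
          have T2 := IH (k + (l+1)) (by omega) k (l+1) rfl (by omega) (by omega)
          have hia : ∃ i, grid R row col k l = addCellAt d i (grid R row col (k+1) l) := by
            have := T1.2.1 (by omega)
            simpa using this
          have hib : ∃ i, grid R row col k l = addCellAt d i (grid R row col k (l+1)) := by
            have := T2.2.2 (by omega)
            simpa using this
          have spec := inv_spec hd hL T0.1 T1.1 T2.1 hia hib
          rw [grid_succ]
          refine ⟨spec.1, ?_, ?_⟩
          · intro _
            simpa using spec.2.2.1
          · intro _
            simpa using spec.2.1
  intro k l
  exact main (k+l) k l rfl

end invariants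
end rules

section walks
variable {d L n m : ℕ} {mu lam al be : ℤ → ℤ}

lemma fin_mk_min {n k : ℕ} (hk : k ≤ n) (h1 : min k n < n + 1) (h2 : k < n + 1) :
    (⟨min k n, h1⟩ : Fin (n+1)) = ⟨k, h2⟩ := Fin.ext (by simp [min_eq_left hk])

lemma fin_mk_zero {n : ℕ} (h1 : 0 < n + 1) : (⟨0, h1⟩ : Fin (n+1)) = 0 := by
  ext; simp

lemma walk_step' {p : Fin (n+1) → ℤ→ℤ} (h : IsSCTWalk d L n mu lam p) {k : ℕ} (hk : k < n) :
    ∃ i, p ⟨k+1, by omega⟩ = addCellAt d i (p ⟨k, by omega⟩) := by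
  obtain ⟨i, hi⟩ := h.2.2.2 ⟨k, hk⟩
  exact ⟨i, hi⟩

lemma walk_zero' {p : Fin (n+1) → ℤ→ℤ} (h : IsSCTWalk d L n mu lam p) (h1 : 0 < n + 1) :
    p ⟨0, h1⟩ = mu := by rw [fin_mk_zero]; exact h.1

lemma walk_last' {p : Fin (n+1) → ℤ→ℤ} (h : IsSCTWalk d L n mu lam p) (h1 : n < n + 1) :
    p ⟨n, h1⟩ = lam := h.2.1

end walks

noncomputable def fGrid (d n m : ℕ) (p : Fin (n+1) → ℤ → ℤ) (q : Fin (m+1) → ℤ → ℤ) :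
    ℕ → ℕ → ℤ → ℤ :=
  grid (localRule d) (fun k => p ⟨min k n, Nat.lt_succ_of_le (min_le_right _ _)⟩)
    (fun l => q ⟨min l m, Nat.lt_succ_of_le (min_le_right _ _)⟩)

noncomputable def bGrid (d n m : ℕ) (p : Fin (n+1) → ℤ → ℤ) (q : Fin (m+1) → ℤ → ℤ) :
    ℕ → ℕ → ℤ → ℤ :=
  grid (fun c x y => localRuleInv d x y c)
    (fun j => p ⟨n - min j n, Nat.lt_succ_of_le (Nat.sub_le _ _)⟩)
    (fun i => q ⟨m - min i m, Nat.lt_succ_of_le (Nat.sub_le _ _)⟩)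

section maps
variable {d L n m : ℕ} {mu lam al be : ℤ → ℤ} {p : Fin (n+1) → ℤ→ℤ} {q : Fin (m+1) → ℤ→ℤ}

lemma fGrid_inv (hd : 1 ≤ d) (hL : 1 ≤ L)
    (hp : IsSCTWalk d L n mu al p) (hq : IsSCTWalk d L m mu be q) :
    ∀ k l, k ≤ n → l ≤ m →
      IsCylindricShape d L (fGrid d n m p q k l) ∧
      (1 ≤ k → ∃ i, fGrid d n m p q k l = addCellAt d i (fGrid d n m p q (k-1) l)) ∧
      (1 ≤ l → ∃ i, fGrid d n m p q k l = addCellAt d i (fGrid d n m p q k (l-1))) := by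
  apply grid_fwd hd hL
  · intro k _; exact hp.2.2.1 _
  · intro k hk
    obtain ⟨i, hi⟩ := walk_step' hp hk
    refine ⟨i, ?_⟩
    simp only [Nat.min_eq_left (show k + 1 ≤ n by omega), Nat.min_eq_left (show k ≤ n by omega)]
    exact hi
  · intro l _; exact hq.2.2.1 _
  · intro l hl
    obtain ⟨i, hi⟩ := walk_step' hq hl
    refine ⟨i, ?_⟩
    simp only [Nat.min_eq_left (show l + 1 ≤ m by omega), Nat.min_eq_left (show l ≤ m by omega)]
    exact hi
  · simp only [Nat.min_eq_left (Nat.zero_le _)]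
    rw [walk_zero' hp, walk_zero' hq]

lemma fGrid_row0 (k : ℕ) :
    fGrid d n m p q k 0 = p ⟨min k n, Nat.lt_succ_of_le (min_le_right _ _)⟩ :=
  grid_row _ _ _ _

lemma fGrid_col0 (hp : IsSCTWalk d L n mu al p) (hq : IsSCTWalk d L m mu be q) (l : ℕ) :
    fGrid d n m p q 0 l = q ⟨min l m, Nat.lt_succ_of_le (min_le_right _ _)⟩ := by
  cases l with
  | zero =>
      rw [fGrid_row0]
      simp only [Nat.min_eq_left (Nat.zero_le _)]
      rw [walk_zero' hp, walk_zero' hq]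
  | succ l' => exact grid_col _ _ _ _

lemma bGrid_inv (hd : 1 ≤ d) (hL : 1 ≤ L)
    (hp : IsSCTWalk d L n be lam p) (hq : IsSCTWalk d L m al lam q) :
    ∀ k l, k ≤ n → l ≤ m →
      IsCylindricShape d L (bGrid d n m p q k l) ∧
      (1 ≤ k → ∃ i, bGrid d n m p q (k-1) l = addCellAt d i (bGrid d n m p q k l)) ∧
      (1 ≤ l → ∃ i, bGrid d n m p q k (l-1) = addCellAt d i (bGrid d n m p q k l)) := by
  apply grid_bwd hd hL
  · intro k _; exact hp.2.2.1 _
  · intro k hk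
    obtain ⟨i, hi⟩ := walk_step' hp (show n - k - 1 < n by omega)
    refine ⟨i, ?_⟩
    simp only [Nat.min_eq_left (show k + 1 ≤ n by omega), Nat.min_eq_left (show k ≤ n by omega),
      show n - (k+1) = n - k - 1 from by omega]
    simp only [show n - k - 1 + 1 = n - k from by omega] at hi
    exact hi
  · intro l _; exact hq.2.2.1 _
  · intro l hl
    obtain ⟨i, hi⟩ := walk_step' hq (show m - l - 1 < m by omega)
    refine ⟨i, ?_⟩
    simp only [Nat.min_eq_left (show l + 1 ≤ m by omega), Nat.min_eq_left (show l ≤ m by omega),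
      show m - (l+1) = m - l - 1 from by omega]
    simp only [show m - l - 1 + 1 = m - l from by omega] at hi
    exact hi
  · simp only [Nat.min_eq_left (Nat.zero_le _), Nat.sub_zero]
    rw [walk_last' hp, walk_last' hq]

lemma bGrid_row0 (k : ℕ) :
    bGrid d n m p q k 0 = p ⟨n - min k n, Nat.lt_succ_of_le (Nat.sub_le _ _)⟩ :=
  grid_row _ _ _ _

lemma bGrid_col0 (hp : IsSCTWalk d L n be lam p) (hq : IsSCTWalk d L m al lam q) (l : ℕ) :
    bGrid d n m p q 0 l = q ⟨m - min l m, Nat.lt_succ_of_le (Nat.sub_le _ _)⟩ := by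
  cases l with
  | zero =>
      rw [bGrid_row0]
      simp only [Nat.min_eq_left (Nat.zero_le _), Nat.min_self, Nat.sub_zero, Nat.sub_self]
      rw [walk_last' hp, walk_last' hq]
  | succ l' => exact grid_col _ _ _ _

end maps

lemma fGrid_succ {d n m : ℕ} {p : Fin (n+1) → ℤ→ℤ} {q : Fin (m+1) → ℤ→ℤ} (k l : ℕ) :
    fGrid d n m p q (k+1) (l+1) =
      localRule d (fGrid d n m p q k l) (fGrid d n m p q (k+1) l) (fGrid d n m p q k (l+1)) :=
  grid_succ _ _ _ _ _

lemma bGrid_succ {d n m : ℕ} {p : Fin (n+1) → ℤ→ℤ} {q : Fin (m+1) → ℤ→ℤ} (k l : ℕ) :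
    bGrid d n m p q (k+1) (l+1) =
      localRuleInv d (bGrid d n m p q (k+1) l) (bGrid d n m p q k (l+1)) (bGrid d n m p q k l) :=
  grid_succ _ _ _ _ _

section maps2
variable {d L n m : ℕ} {mu lam al be : ℤ → ℤ} {p : Fin (n+1) → ℤ→ℤ} {q : Fin (m+1) → ℤ→ℤ}

lemma fGrid_walks (hd : 1 ≤ d) (hL : 1 ≤ L)
    (hp : IsSCTWalk d L n mu al p) (hq : IsSCTWalk d L m mu be q) :
    IsSCTWalk d L n be (fGrid d n m p q n m) (fun k => fGrid d n m p q (↑k) m) ∧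
    IsSCTWalk d L m al (fGrid d n m p q n m) (fun l => fGrid d n m p q n (↑l)) := by
  have T := fGrid_inv hd hL hp hq
  constructor
  · refine ⟨?_, ?_, fun k => (T ↑k m k.is_le le_rfl).1, fun k => ?_⟩
    · show fGrid d n m p q (↑(0 : Fin (n+1))) m = be
      simp only [Fin.val_zero]
      rw [fGrid_col0 hp hq m]
      simp only [Nat.min_self]
      exact walk_last' hq _
    · show fGrid d n m p q (↑(Fin.last n)) m = _
      simp only [Fin.val_last]
    · simp only [Fin.val_succ, Fin.coe_castSucc]
      have h2 := (T (↑k + 1) m (by omega) le_rfl).2.1 (by omega)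
      simpa using h2
  · refine ⟨?_, ?_, fun l => (T n ↑l le_rfl l.is_le).1, fun l => ?_⟩
    · show fGrid d n m p q n (↑(0 : Fin (m+1))) = al
      simp only [Fin.val_zero]
      rw [fGrid_row0]
      simp only [Nat.min_self]
      exact walk_last' hp _
    · show fGrid d n m p q n (↑(Fin.last m)) = _
      simp only [Fin.val_last]
    · simp only [Fin.val_succ, Fin.coe_castSucc]
      have h2 := (T n (↑l + 1) le_rfl (by omega)).2.2 (by omega)
      simpa using h2

lemma bGrid_walks (hd : 1 ≤ d) (hL : 1 ≤ L)
    (hp : IsSCTWalk d L n be lam p) (hq : IsSCTWalk d L m al lam q) :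
    IsSCTWalk d L n (bGrid d n m p q n m) al (fun k => bGrid d n m p q (n - ↑k) m) ∧
    IsSCTWalk d L m (bGrid d n m p q n m) be (fun l => bGrid d n m p q n (m - ↑l)) := by
  have T := bGrid_inv hd hL hp hq
  constructor
  · refine ⟨?_, ?_, fun k => (T (n - ↑k) m (by omega) le_rfl).1, fun k => ?_⟩
    · show bGrid d n m p q (n - ↑(0 : Fin (n+1))) m = _
      simp only [Fin.val_zero, Nat.sub_zero]
    · show bGrid d n m p q (n - ↑(Fin.last n)) m = al
      simp only [Fin.val_last, Nat.sub_self]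
      rw [bGrid_col0 hp hq m]
      simp only [Nat.min_self, Nat.sub_self]
      exact walk_zero' hq _
    · simp only [Fin.val_succ, Fin.coe_castSucc]
      have h2 := (T (n - ↑k) m (by omega) le_rfl).2.1 (by omega)
      simp only [show n - (k:ℕ) - 1 = n - ((k:ℕ) + 1) from by omega] at h2
      exact h2
  · refine ⟨?_, ?_, fun l => (T n (m - ↑l) le_rfl (by omega)).1, fun l => ?_⟩
    · show bGrid d n m p q n (m - ↑(0 : Fin (m+1))) = _
      simp only [Fin.val_zero, Nat.sub_zero]
    · show bGrid d n m p q n (m - ↑(Fin.last m)) = be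
      simp only [Fin.val_last, Nat.sub_self]
      rw [bGrid_row0]
      simp only [Nat.min_self, Nat.sub_self]
      exact walk_zero' hp _
    · simp only [Fin.val_succ, Fin.coe_castSucc]
      have h2 := (T n (m - ↑l) le_rfl (by omega)).2.2 (by omega)
      simp only [show m - (l:ℕ) - 1 = m - ((l:ℕ) + 1) from by omega] at h2
      exact h2

lemma comp_fb (hd : 1 ≤ d) (hL : 1 ≤ L)
    (hp : IsSCTWalk d L n mu al p) (hq : IsSCTWalk d L m mu be q) :
    ∀ j i, j ≤ n → i ≤ m →
      bGrid d n m (fun k => fGrid d n m p q (↑k) m) (fun l => fGrid d n m p q n (↑l)) j i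
        = fGrid d n m p q (n - j) (m - i) := by
  have T := fGrid_inv hd hL hp hq
  have main : ∀ t j i, j + i = t → j ≤ n → i ≤ m →
      bGrid d n m (fun k => fGrid d n m p q (↑k) m) (fun l => fGrid d n m p q n (↑l)) j i
        = fGrid d n m p q (n - j) (m - i) := by
    intro t
    induction t using Nat.strong_induction_on with
    | _ t IH =>
      intro j i ht hj hi
      match j, i with
      | j, 0 =>
          rw [bGrid_row0]
          simp only [Nat.min_eq_left hj, Nat.sub_zero]
      | 0, i+1 =>
          unfold bGrid
          rw [grid_col]
          simp [Nat.min_eq_left hi]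
      | j+1, i+1 =>
          rw [bGrid_succ,
            IH (j+1+i) (by omega) (j+1) i rfl (by omega) (by omega),
            IH (j+(i+1)) (by omega) j (i+1) rfl (by omega) (by omega),
            IH (j+i) (by omega) j i rfl (by omega) (by omega)]
          obtain ⟨k, hk⟩ : ∃ k, n - j = k + 1 := ⟨n - j - 1, by omega⟩
          obtain ⟨l, hl⟩ : ∃ l, m - i = l + 1 := ⟨m - i - 1, by omega⟩
          rw [show n - (j+1) = k from by omega, show m - (i+1) = l from by omega, hk, hl]
          have hia : ∃ i', fGrid d n m p q (k+1) l = addCellAt d i' (fGrid d n m p q k l) := by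
            have h2 := (T (k+1) l (by omega) (by omega)).2.1 (by omega)
            simpa using h2
          have hib : ∃ i', fGrid d n m p q k (l+1) = addCellAt d i' (fGrid d n m p q k l) := by
            have h2 := (T k (l+1) (by omega) (by omega)).2.2 (by omega)
            simpa using h2
          have spec := rule_spec hd hL (T k l (by omega) (by omega)).1
            (T (k+1) l (by omega) (by omega)).1 (T k (l+1) (by omega) (by omega)).1 hia hib
          rw [localRuleInv_comm, fGrid_succ]
          exact spec.2.2.2
  intro j i
  exact main (j+i) j i rfl

lemma comp_bf (hd : 1 ≤ d) (hL : 1 ≤ L)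
    (hp : IsSCTWalk d L n be lam p) (hq : IsSCTWalk d L m al lam q) :
    ∀ k l, k ≤ n → l ≤ m →
      fGrid d n m (fun k => bGrid d n m p q (n - ↑k) m) (fun l => bGrid d n m p q n (m - ↑l)) k l
        = bGrid d n m p q (n - k) (m - l) := by
  have T := bGrid_inv hd hL hp hq
  have main : ∀ t k l, k + l = t → k ≤ n → l ≤ m →
      fGrid d n m (fun k => bGrid d n m p q (n - ↑k) m) (fun l => bGrid d n m p q n (m - ↑l)) k l
        = bGrid d n m p q (n - k) (m - l) := by
    intro t
    induction t using Nat.strong_induction_on with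
    | _ t IH =>
      intro k l ht hk hl
      match k, l with
      | k, 0 =>
          rw [fGrid_row0]
          simp only [Nat.min_eq_left hk, Nat.sub_zero]
      | 0, l+1 =>
          unfold fGrid
          rw [grid_col]
          simp [Nat.min_eq_left hl]
      | k+1, l+1 =>
          rw [fGrid_succ,
            IH (k+1+l) (by omega) (k+1) l rfl (by omega) (by omega),
            IH (k+(l+1)) (by omega) k (l+1) rfl (by omega) (by omega),
            IH (k+l) (by omega) k l rfl (by omega) (by omega)]
          obtain ⟨j, hj⟩ : ∃ j, n - k = j + 1 := ⟨n - k - 1, by omega⟩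
          obtain ⟨i, hi⟩ : ∃ i, m - l = i + 1 := ⟨m - l - 1, by omega⟩
          rw [show n - (k+1) = j from by omega, show m - (l+1) = i from by omega, hj, hi]
          have hia : ∃ i', bGrid d n m p q j i = addCellAt d i' (bGrid d n m p q (j+1) i) := by
            have h2 := (T (j+1) i (by omega) (by omega)).2.1 (by omega)
            simpa using h2
          have hib : ∃ i', bGrid d n m p q j i = addCellAt d i' (bGrid d n m p q j (i+1)) := by
            have h2 := (T j (i+1) (by omega) (by omega)).2.2 (by omega)
            simpa using h2
          have spec := inv_spec hd hL (T j i (by omega) (by omega)).1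
            (T (j+1) i (by omega) (by omega)).1 (T j (i+1) (by omega) (by omega)).1 hia hib
          rw [localRule_comm, bGrid_succ]
          exact spec.2.2.2
  intro k l
  exact main (k+l) k l rfl

end maps2


/-- `Σ_{μ ⊆ α,β, |α/μ|=n, |β/μ|=m} |SCT(α/μ)|·|SCT(β/μ)|
  = Σ_{λ ⊇ α,β, |λ/β|=n, |λ/α|=m} |SCT(λ/β)|·|SCT(λ/α)|`, stated as an equality of
cardinalities of the corresponding sets of pairs of tableaux with a common inner
(resp. outer) shape. -/
theorem stmt17 (d L : ℕ) (hd : 1 ≤ d) (hL : 1 ≤ L) (m n : ℕ) (α β : ℤ → ℤ)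
    (hα : IsCylindricShape d L α) (hβ : IsCylindricShape d L β)
    (hsize : (∑ i ∈ Finset.Icc (1 : ℤ) (d : ℤ), α i) + m =
             (∑ i ∈ Finset.Icc (1 : ℤ) (d : ℤ), β i) + n) :
    Nat.card {x : (ℤ → ℤ) × (Fin (n + 1) → ℤ → ℤ) × (Fin (m + 1) → ℤ → ℤ) //
        IsSCTWalk d L n x.1 α x.2.1 ∧ IsSCTWalk d L m x.1 β x.2.2} =
    Nat.card {x : (ℤ → ℤ) × (Fin (n + 1) → ℤ → ℤ) × (Fin (m + 1) → ℤ → ℤ) //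
        IsSCTWalk d L n β x.1 x.2.1 ∧ IsSCTWalk d L m α x.1 x.2.2} := by
  apply Nat.card_congr
  refine
    { toFun := fun x => ⟨(fGrid d n m x.1.2.1 x.1.2.2 n m,
        fun k => fGrid d n m x.1.2.1 x.1.2.2 (↑k) m,
        fun l => fGrid d n m x.1.2.1 x.1.2.2 n (↑l)),
        (fGrid_walks hd hL x.2.1 x.2.2).1, (fGrid_walks hd hL x.2.1 x.2.2).2⟩
      invFun := fun y => ⟨(bGrid d n m y.1.2.1 y.1.2.2 n m,
        fun k => bGrid d n m y.1.2.1 y.1.2.2 (n - ↑k) m,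
        fun l => bGrid d n m y.1.2.1 y.1.2.2 n (m - ↑l)),
        (bGrid_walks hd hL y.2.1 y.2.2).1, (bGrid_walks hd hL y.2.1 y.2.2).2⟩
      left_inv := ?_
      right_inv := ?_ }
  · rintro ⟨⟨mu, p, q⟩, hp, hq⟩
    have C := comp_fb hd hL hp hq
    apply Subtype.ext
    refine Prod.ext ?_ (Prod.ext ?_ ?_)
    · show bGrid d n m _ _ n m = mu
      rw [C n m le_rfl le_rfl]
      simp only [Nat.sub_self]
      rw [fGrid_row0]
      simp only [Nat.min_eq_left (Nat.zero_le _)]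
      exact walk_zero' hp _
    · show (fun k : Fin (n+1) => bGrid d n m _ _ (n - ↑k) m) = p
      funext k
      show bGrid d n m _ _ (n - ↑k) m = p k
      rw [C (n - ↑k) m (by omega) le_rfl]
      simp only [Nat.sub_self, show n - (n - (k:ℕ)) = (k:ℕ) from by omega]
      rw [fGrid_row0]
      simp only [Nat.min_eq_left k.is_le]
    · show (fun l : Fin (m+1) => bGrid d n m _ _ n (m - ↑l)) = q
      funext l
      show bGrid d n m _ _ n (m - ↑l) = q l
      rw [C n (m - ↑l) le_rfl (by omega)]
      simp only [Nat.sub_self, show m - (m - (l:ℕ)) = (l:ℕ) from by omega]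
      rw [fGrid_col0 hp hq]
      simp only [Nat.min_eq_left l.is_le]
  · rintro ⟨⟨lam, p, q⟩, hp, hq⟩
    have C := comp_bf hd hL hp hq
    apply Subtype.ext
    refine Prod.ext ?_ (Prod.ext ?_ ?_)
    · show fGrid d n m _ _ n m = lam
      rw [C n m le_rfl le_rfl]
      simp only [Nat.sub_self]
      rw [bGrid_row0]
      simp only [Nat.min_eq_left (Nat.zero_le _), Nat.sub_zero]
      exact walk_last' hp _
    · show (fun k : Fin (n+1) => fGrid d n m _ _ (↑k) m) = p
      funext k
      show fGrid d n m _ _ (↑k) m = p k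
      rw [C (↑k) m k.is_le le_rfl]
      simp only [Nat.sub_self]
      rw [bGrid_row0]
      simp only [Nat.min_eq_left (show n - (k:ℕ) ≤ n from by omega),
        show n - (n - (k:ℕ)) = (k:ℕ) from by omega]
    · show (fun l : Fin (m+1) => fGrid d n m _ _ n (↑l)) = q
      funext l
      show fGrid d n m _ _ n (↑l) = q l
      rw [C n (↑l) le_rfl l.is_le]
      simp only [Nat.sub_self]
      rw [bGrid_col0 hp hq]
      simp only [Nat.min_eq_left (show m - (l:ℕ) ≤ m from by omega),
        show m - (m - (l:ℕ)) = (l:ℕ) from by omega]
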